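/- Suppose b(k)/a(k) = -iq₀(0)/(2k) + O(1/k³) as k → ∞ in D₁ ∪ D₂, with b/a analytic on the contour γ' (a deformation of γ avoiding zeros of a) and at infinity within the closure of D₁. Then f₀(0) := ∫_{γ'} (b(k)/a(k)) dk = -π q₀(0)/8. -/

import Mathlib

/-!
Integrate `h` around the boundary of the sector `0 ≤ arg k ≤ π/4` cut off at radius `R`.
Through `k = exp w` the sector minus a small disc at the vertex is a rectangle, so Cauchy's
theorem for rectangles applies; letting the inner radius shrink to `0` gives
`∫_{γ_R} h = -∫_{arc_R} h`. On the arc, `h(k) = -i q₀(0)/(2k) + O(R⁻³)`: the principal part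
contributes `i · (π/4) · (-i q₀(0)/2) = π q₀(0)/8`, and the remainder is `O(R⁻²)`.
-/

open Filter MeasureTheory

/-- Truncated contour integral along `γ_R = [R e^{iπ/4}, 0] ∪ [0, R]`. -/
noncomputable def gammaTrunc (f : ℂ → ℂ) (R : ℝ) : ℂ :=
  ∫ r in (0:ℝ)..R,
    (f (r : ℂ) - Complex.exp (Real.pi * Complex.I / 4) *
      f ((r : ℂ) * Complex.exp (Real.pi * Complex.I / 4)))

open Set Complex intervalIntegral Topology
open scoped Real Interval

def sector (θ : ℝ) : Set ℂ := {k : ℂ | 0 ≤ k.arg ∧ k.arg ≤ θ}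

lemma zero_mem_sector {θ : ℝ} (hθ : 0 ≤ θ) : (0 : ℂ) ∈ sector θ := by
  simpa [sector] using hθ

noncomputable def arcIntegral (f : ℂ → ℂ) (ρ θ : ℝ) : ℂ :=
  ∫ y in 0..θ, circleMap 0 ρ y * I * f (circleMap 0 ρ y)

section

variable {f : ℂ → ℂ} {θ ρ : ℝ}

lemma circleMap_zero_mem_sector (hθ : θ ≤ π) (hρ : 0 ≤ ρ) {y : ℝ} (hy : y ∈ Icc 0 θ) :
    circleMap 0 ρ y ∈ sector θ := by
  rcases hρ.eq_or_lt with rfl | hρ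
  · simpa using zero_mem_sector (hy.1.trans hy.2)
  · have harg : (circleMap 0 ρ y).arg = y := by
      rw [circleMap_zero, arg_real_mul _ hρ, exp_mul_I,
        arg_cos_add_sin_mul_I ⟨by linarith [hy.1, Real.pi_pos], hy.2.trans hθ⟩]
    show 0 ≤ (circleMap 0 ρ y).arg ∧ (circleMap 0 ρ y).arg ≤ θ
    rwa [harg]

lemma norm_arcIntegral_le (hθ : 0 ≤ θ) {B : ℝ}
    (hB : ∀ y ∈ Icc 0 θ, ‖f (circleMap 0 ρ y)‖ ≤ B) :
    ‖arcIntegral f ρ θ‖ ≤ θ * (|ρ| * B) := by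
  unfold arcIntegral
  have hbound : ∀ y ∈ uIoc 0 θ, ‖circleMap 0 ρ y * I * f (circleMap 0 ρ y)‖ ≤ |ρ| * B := by
    intro y hy
    rw [uIoc_of_le hθ] at hy
    rw [norm_mul, norm_mul, norm_circleMap_zero, norm_I, mul_one]
    exact mul_le_mul_of_nonneg_left (hB y (Ioc_subset_Icc_self hy)) (abs_nonneg ρ)
  simpa [abs_of_nonneg hθ, mul_comm] using norm_integral_le_of_norm_le_const hbound

lemma tendsto_arcIntegral_zero (hθ : 0 ≤ θ) {l : Filter ℝ} {B : ℝ → ℝ}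
    (hB : ∀ᶠ ρ in l, ∀ y ∈ Icc 0 θ, ‖f (circleMap 0 ρ y)‖ ≤ B ρ)
    (hlim : Tendsto (fun ρ => |ρ| * B ρ) l (𝓝 0)) :
    Tendsto (arcIntegral f · θ) l (𝓝 0) := by
  refine squeeze_zero_norm' ?_ (by simpa using hlim.const_mul θ)
  filter_upwards [hB] with ρ hρ using norm_arcIntegral_le hθ hρ

lemma arcIntegral_add_const_div (hθ0 : 0 ≤ θ) (hθ : θ ≤ π) (hf : ContinuousOn f (sector θ))
    (hρ : 0 < ρ) (c : ℂ) :
    arcIntegral (fun k => f k + c / k) ρ θ = arcIntegral f ρ θ + θ * I * c := by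
  have hint :
      IntervalIntegrable (fun y => circleMap 0 ρ y * I * f (circleMap 0 ρ y)) volume 0 θ := by
    refine ContinuousOn.intervalIntegrable ?_
    rw [uIcc_of_le hθ0]
    exact (continuous_circleMap 0 ρ).continuousOn.mul continuousOn_const |>.mul <|
      hf.comp (continuous_circleMap 0 ρ).continuousOn
        fun y hy => circleMap_zero_mem_sector hθ hρ.le hy
  have hpt : ∀ y, circleMap 0 ρ y * I * (f (circleMap 0 ρ y) + c / circleMap 0 ρ y)
      = circleMap 0 ρ y * I * f (circleMap 0 ρ y) + I * c := by
    intro y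
    field_simp [circleMap_ne_center hρ.ne']
  simp only [arcIntegral, hpt]
  rw [integral_add hint intervalIntegrable_const, intervalIntegral.integral_const, sub_zero,
    real_smul, mul_assoc]

lemma integral_exp_smul_comp {E : Type*} [NormedAddCommGroup E] [NormedSpace ℝ E] (g : ℝ → E)
    (a b : ℝ) :
    ∫ x in a..b, Real.exp x • g (Real.exp x) = ∫ r in Real.exp a..Real.exp b, g r :=
  integral_deriv_smul_comp_of_deriv_nonneg Real.continuous_exp.continuousOn
    (fun x _ => Real.hasDerivAt_exp x) (fun x _ => (Real.exp_pos x).le)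

lemma continuousOn_comp_ray (hθ : θ ≤ π) (hf : ContinuousOn f (sector θ)) {y : ℝ}
    (hy : y ∈ Icc 0 θ) : ContinuousOn (fun r : ℝ => f (r * exp (y * I))) (Ici 0) :=
  hf.comp (by fun_prop) fun r hr => circleMap_zero r y ▸ circleMap_zero_mem_sector hθ hr hy

lemma exp_add_mul_I_eq_circleMap (x y : ℝ) : exp (x + y * I) = circleMap 0 (Real.exp x) y := by
  rw [circleMap_zero, ofReal_exp, exp_add]

lemma integral_rays_eq_arcIntegral_sub (hθ0 : 0 ≤ θ) (hθ : θ ≤ π)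
    (hf : DifferentiableOn ℂ f (sector θ)) {ε R : ℝ} (hε : 0 < ε) (hεR : ε ≤ R) :
    ∫ r in ε..R, (f r - exp (θ * I) * f (r * exp (θ * I))) =
      arcIntegral f ε θ - arcIntegral f R θ := by
  set a := Real.log ε
  set b := Real.log R
  have hexpa : Real.exp a = ε := Real.exp_log hε
  have hexpb : Real.exp b = R := Real.exp_log (hε.trans_le hεR)
  set H : ℂ → ℂ := fun w => exp w * f (exp w)
  have hmaps : MapsTo exp ([[a, b]] ×ℂ [[0, θ]]) (sector θ) := by
    intro w hw
    rw [← re_add_im w, exp_add_mul_I_eq_circleMap]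
    exact circleMap_zero_mem_sector hθ (Real.exp_pos _).le (uIcc_of_le hθ0 ▸ hw.2)
  have hH : DifferentiableOn ℂ H ([[a, b]] ×ℂ [[0, θ]]) :=
    differentiable_exp.differentiableOn.mul (hf.comp differentiable_exp.differentiableOn hmaps)
  have hrect := integral_boundary_rect_eq_zero_of_differentiableOn H a (b + θ * I)
    (by simpa using hH)
  have hray : ∀ y : ℝ, ∫ x in a..b, H (x + y * I) =
      ∫ r in ε..R, exp (y * I) * f (r * exp (y * I)) := by
    intro y
    rw [← hexpa, ← hexpb, ← integral_exp_smul_comp]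
    refine integral_congr fun x _ => ?_
    simp only [H, exp_add_mul_I_eq_circleMap, circleMap_zero, real_smul]
    ring
  have harc : ∀ x : ℝ, I • ∫ y in (0 : ℝ)..θ, H (x + y * I) = arcIntegral f (Real.exp x) θ := by
    intro x
    rw [arcIntegral, smul_eq_mul, ← intervalIntegral.integral_const_mul]
    refine integral_congr fun y _ => ?_
    simp only [H, exp_add_mul_I_eq_circleMap]
    ring
  simp only [ofReal_re, ofReal_im, add_re, add_im, mul_re, mul_im, I_re, I_im, mul_zero, mul_one,
    sub_zero, zero_add, add_zero] at hrect
  rw [hray 0, hray θ, harc, harc, hexpa, hexpb] at hrect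
  have hint : ∀ y ∈ Icc 0 θ,
      IntervalIntegrable (fun r : ℝ => exp (y * I) * f (r * exp (y * I))) volume ε R := by
    refine fun y hy => (continuousOn_const.mul (continuousOn_comp_ray hθ hf.continuousOn hy)).mono
      ?_ |>.intervalIntegrable
    rw [uIcc_of_le hεR]
    exact fun r hr => hε.le.trans hr.1
  calc ∫ r in ε..R, (f r - exp (θ * I) * f (r * exp (θ * I)))
      = ∫ r in ε..R, (exp ((0 : ℝ) * I) * f (r * exp ((0 : ℝ) * I))
          - exp (θ * I) * f (r * exp (θ * I))) := by simp
    _ = arcIntegral f ε θ - arcIntegral f R θ := by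
      rw [integral_sub (hint 0 ⟨le_rfl, hθ0⟩) (hint θ ⟨hθ0, le_rfl⟩)]
      linear_combination hrect

lemma tendsto_arcIntegral_nhdsGT_zero (hθ0 : 0 ≤ θ) (hθ : θ ≤ π)
    (hf : ContinuousWithinAt f (sector θ) 0) :
    Tendsto (arcIntegral f · θ) (𝓝[>] 0) (𝓝 0) := by
  obtain ⟨δ, hδ, hball⟩ := Metric.mem_nhdsWithin_iff.1 <|
    hf.norm.eventually (ge_mem_nhds (lt_add_one ‖f 0‖))
  refine tendsto_arcIntegral_zero hθ0 (B := fun _ => ‖f 0‖ + 1) ?_ ?_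
  · filter_upwards [Ioo_mem_nhdsGT hδ] with ρ hρ y hy
    refine hball ⟨?_, circleMap_zero_mem_sector hθ hρ.1.le hy⟩
    simpa [abs_of_pos hρ.1] using hρ.2
  · exact ((continuous_abs.mul continuous_const).tendsto' 0 0 (by simp)).mono_left
      nhdsWithin_le_nhds

lemma integral_rays_eq_neg_arcIntegral (hθ0 : 0 ≤ θ) (hθ : θ ≤ π)
    (hf : DifferentiableOn ℂ f (sector θ)) {R : ℝ} (hR : 0 < R) :
    ∫ r in 0..R, (f r - exp (θ * I) * f (r * exp (θ * I))) = -arcIntegral f R θ := by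
  set φ : ℝ → ℂ := fun r => f r - exp (θ * I) * f (r * exp (θ * I))
  have hφ : ContinuousOn φ (Icc 0 R) := by
    have hray : ∀ y ∈ Icc 0 θ, ContinuousOn (fun r : ℝ => f (r * exp (y * I))) (Icc 0 R) :=
      fun y hy => (continuousOn_comp_ray hθ hf.continuousOn hy).mono Icc_subset_Ici_self
    have hray0 : ContinuousOn (fun r : ℝ => f r) (Icc 0 R) := by simpa using hray 0 ⟨le_rfl, hθ0⟩
    exact hray0.sub (continuousOn_const.mul (hray θ ⟨hθ0, le_rfl⟩))
  have hprim : Tendsto (fun ε => ∫ r in ε..R, φ r) (𝓝[>] 0) (𝓝 (∫ r in 0..R, φ r)) := by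
    have := continuousOn_primitive_interval_left (a := 0) (b := R) (μ := volume)
      (uIcc_of_le hR.le ▸ hφ).integrableOn_Icc
    rw [uIcc_of_le hR.le] at this
    exact (this 0 ⟨le_rfl, hR.le⟩).mono_left <|
      nhdsWithin_Ioo_eq_nhdsGT hR ▸ nhdsWithin_mono _ Ioo_subset_Icc_self
  have harc : Tendsto (fun ε => ∫ r in ε..R, φ r) (𝓝[>] 0) (𝓝 (0 - arcIntegral f R θ)) := by
    refine ((tendsto_arcIntegral_nhdsGT_zero hθ0 hθ
      (hf.continuousOn _ (zero_mem_sector hθ0))).sub_const _).congr' ?_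
    filter_upwards [Ioo_mem_nhdsGT hR] with ε hε
    exact (integral_rays_eq_arcIntegral_sub hθ0 hθ hf hε.1 hε.2.le).symm
  rw [tendsto_nhds_unique hprim harc, zero_sub]

end

/-- If `h = b/a` is analytic in the closed sector `0 ≤ arg k ≤ π/4` and satisfies
`h(k) = -i q₀(0)/(2k) + O(1/k³)` there as `k → ∞`, then
`f₀(0) = ∫_{γ'} h(k) dk = -π q₀(0)/8`. -/
theorem f0_at_zero (h : ℂ → ℂ) (q00 : ℂ)
    (hanal : DifferentiableOn ℂ h {k : ℂ | 0 ≤ k.arg ∧ k.arg ≤ Real.pi / 4})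
    (hdecay : ∃ C M : ℝ, ∀ k : ℂ, M ≤ ‖k‖ → 0 ≤ k.arg → k.arg ≤ Real.pi / 4 →
      ‖h k + Complex.I * q00 / (2 * k)‖ ≤ C / ‖k‖ ^ 3) :
    Tendsto (fun R => gammaTrunc h R) atTop (nhds (-(Real.pi * q00 / 8))) := by
  obtain ⟨C, M, hCM⟩ := hdecay
  have hθ0 : 0 ≤ π / 4 := by positivity
  have hθ : π / 4 ≤ π := by linarith [Real.pi_pos]
  set g : ℂ → ℂ := fun k => h k + I * q00 / 2 / k
  have hgamma : ∀ R > 0, gammaTrunc h R = -(π * q00 / 8) - arcIntegral g R (π / 4) := by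
    intro R hR
    have hexp : exp (π * I / 4) = exp ((π / 4 : ℝ) * I) := by push_cast; ring_nf
    rw [gammaTrunc, hexp, integral_rays_eq_neg_arcIntegral hθ0 hθ hanal hR,
      arcIntegral_add_const_div hθ0 hθ hanal.continuousOn hR]
    push_cast
    linear_combination (π * q00 / 8) * I_sq
  have hg : Tendsto (arcIntegral g · (π / 4)) atTop (𝓝 0) := by
    refine tendsto_arcIntegral_zero hθ0 (B := fun ρ => C / |ρ| ^ 3) ?_ ?_
    · filter_upwards [eventually_ge_atTop (max M 0)] with R hR y hy
      have hmem := circleMap_zero_mem_sector hθ (le_of_max_le_right hR) hy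
      simpa [g, div_div, norm_circleMap_zero] using
        hCM _ (by simpa [norm_circleMap_zero] using (le_of_max_le_left hR).trans (le_abs_self R))
          hmem.1 hmem.2
    · refine ((tendsto_const_nhds (x := C)).div_atTop (tendsto_pow_atTop two_ne_zero)).congr' ?_
      filter_upwards [eventually_gt_atTop 0] with R hR
      rw [abs_of_pos hR]
      field_simp
  refine (sub_zero (-(π * q00 / 8) : ℂ) ▸ tendsto_const_nhds.sub hg).congr' ?_
  filter_upwards [eventually_gt_atTop 0] with R hR using (hgamma R hR).symm
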